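/- The series-defined fundamental solution profile solves the radial Helmholtz equation: the function g is twice differentiable on (0, ∞) and satisfies g''(t) + g'(t)/t + k²·g(t) = 0 for every t > 0. (Equivalently, the radial function x ↦ g(‖x‖) solves Δu + k²u = 0 on ℝ² ∖ {0}; this encodes the Bessel-function identity H₀'(z)/z + H₀''(z) = −H₀(z) used in the proof of Proposition 4.2.) -/

import Mathlib

open Real

noncomputable section

/-- The coefficients `b_j = (−1)^j/(2π·2^{2j}·(j!)²)`. -/
def bcoef (j : ℕ) : ℂ :=
  ((-1 : ℂ))^j / (2 * Real.pi * 2^(2*j) * ((Nat.factorial j : ℂ))^2)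

/-- The coefficients `c_j = b_j·(γ_E − log 2 − iπ/2 − Σ_{n=1}^{j} 1/n)`. -/
def ccoef (j : ℕ) : ℂ :=
  bcoef j * ((Real.eulerMascheroniConstant : ℂ) - (Real.log 2 : ℂ)
    - Complex.I * (Real.pi : ℂ) / 2 - ∑ n ∈ Finset.Icc 1 j, (1 : ℂ) / (n : ℂ))

/-- The constant `η_k = (1/(2π))(log k + γ_E − log 2) − i/4`. -/
def etaK (k : ℝ) : ℂ :=
  (1 / (2 * (Real.pi : ℂ))) * ((Real.log k : ℂ) + (Real.eulerMascheroniConstant : ℂ)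
    - (Real.log 2 : ℂ)) - Complex.I / 4

/-- The radial profile `g(t) = (1/(2π))·log t + η_k + Σ_{j≥1} (b_j log(kt) + c_j)(kt)^{2j}`
of the outgoing fundamental solution of the 2D Helmholtz equation. -/
def gfun (k : ℝ) (t : ℝ) : ℂ :=
  (1 / (2 * (Real.pi : ℂ))) * (Real.log t : ℂ) + etaK k
    + ∑' j : ℕ, (bcoef (j+1) * (Real.log (k * t) : ℂ) + ccoef (j+1))
        * ((k * t : ℝ) : ℂ)^(2*(j+1))



lemma fact_ne' (j : ℕ) : ((Nat.factorial j : ℂ)) ≠ 0 :=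
  Nat.cast_ne_zero.2 (Nat.factorial_ne_zero j)

lemma pi_ne' : ((Real.pi : ℂ)) ≠ 0 := Complex.ofReal_ne_zero.2 Real.pi_ne_zero

lemma denom_ne (j : ℕ) : (2 * (Real.pi:ℂ) * 2^(2*j) * ((Nat.factorial j : ℂ))^2) ≠ 0 := by
  refine mul_ne_zero (mul_ne_zero (mul_ne_zero two_ne_zero pi_ne') ?_) ?_
  · exact pow_ne_zero _ two_ne_zero
  · exact pow_ne_zero _ (fact_ne' j)

lemma rec_b (m : ℕ) : (4*((m:ℂ)+1)^2) * bcoef (m+1) = - bcoef m := by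
  unfold bcoef
  rw [mul_div_assoc', ← neg_div, div_eq_div_iff (denom_ne (m+1)) (denom_ne m)]
  rw [Nat.factorial_succ]
  push_cast
  ring

lemma rec_c (m : ℕ) :
    (4*((m:ℂ)+1)^2) * ccoef (m+1) + (4*((m:ℂ)+1)) * bcoef (m+1) = - ccoef m := by
  have hm : ((m:ℂ)+1) ≠ 0 := Nat.cast_add_one_ne_zero m
  have ht : (1/((m:ℂ)+1)) * ((m:ℂ)+1) = 1 := by field_simp
  have hb := rec_b m
  unfold ccoef
  rw [Finset.sum_Icc_succ_top (by omega : 1 ≤ m+1), Nat.cast_add, Nat.cast_one]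
  linear_combination ((Real.eulerMascheroniConstant : ℂ) - (Real.log 2 : ℂ)
      - Complex.I * (Real.pi : ℂ) / 2 - ∑ n ∈ Finset.Icc 1 m, (1 : ℂ) / (n : ℂ)) * hb
    - 4*((m:ℂ)+1)*bcoef (m+1) * ht

def constA : ℂ := (Real.eulerMascheroniConstant : ℂ) - (Real.log 2 : ℂ)
    - Complex.I * (Real.pi : ℂ) / 2

lemma norm_bcoef_le (j : ℕ) : ‖bcoef j‖ ≤ 1 / ((Nat.factorial j : ℝ))^2 := by
  have hf : (1:ℝ) ≤ (Nat.factorial j : ℝ) := by exact_mod_cast Nat.one_le_iff_ne_zero.2 (Nat.factorial_ne_zero j)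
  have hfp : (0:ℝ) < ((Nat.factorial j : ℝ))^2 := by positivity
  unfold bcoef
  rw [norm_div, norm_pow, norm_neg, norm_one, one_pow]
  have hden : ‖(2 * (Real.pi:ℂ) * 2^(2*j) * ((Nat.factorial j : ℂ))^2)‖
      = 2 * Real.pi * 2^(2*j) * ((Nat.factorial j : ℝ))^2 := by
    rw [norm_mul, norm_mul, norm_mul, norm_pow, norm_pow]
    simp [Complex.norm_real, abs_of_nonneg Real.pi_pos.le, Complex.norm_natCast]
  rw [hden]
  rw [div_le_div_iff₀ (by positivity) hfp]
  have h1 : (1:ℝ) ≤ 2 * Real.pi * 2^(2*j) := by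
    have : (1:ℝ) ≤ (2:ℝ)^(2*j) := one_le_pow₀ (by norm_num)
    nlinarith [Real.pi_gt_three]
  nlinarith
lemma norm_ccoef_le (j : ℕ) :
    ‖ccoef j‖ ≤ (‖constA‖ + 1) * ((j:ℝ)+1) / ((Nat.factorial j : ℝ))^2 := by
  have hS : ‖∑ n ∈ Finset.Icc 1 j, (1 : ℂ) / (n : ℂ)‖ ≤ (j:ℝ) := by
    calc ‖∑ n ∈ Finset.Icc 1 j, (1 : ℂ) / (n : ℂ)‖
        ≤ ∑ n ∈ Finset.Icc 1 j, ‖(1 : ℂ) / (n : ℂ)‖ := norm_sum_le _ _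
      _ ≤ ∑ n ∈ Finset.Icc 1 j, 1 := by
          refine Finset.sum_le_sum fun n hn => ?_
          have hn1 : 1 ≤ n := (Finset.mem_Icc.1 hn).1
          rw [norm_div, norm_one, Complex.norm_natCast]
          rw [div_le_one (by exact_mod_cast hn1)]
          exact_mod_cast hn1
      _ = (j:ℝ) := by simp
  have h1 : ‖ccoef j‖ ≤ ‖bcoef j‖ * (‖constA‖ + (j:ℝ)) := by
    unfold ccoef
    rw [norm_mul]
    refine mul_le_mul_of_nonneg_left ?_ (norm_nonneg _)
    calc ‖constA - ∑ n ∈ Finset.Icc 1 j, (1 : ℂ) / (n : ℂ)‖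
        ≤ ‖constA‖ + ‖∑ n ∈ Finset.Icc 1 j, (1 : ℂ) / (n : ℂ)‖ := norm_sub_le _ _
      _ ≤ ‖constA‖ + (j:ℝ) := by linarith
  calc ‖ccoef j‖ ≤ ‖bcoef j‖ * (‖constA‖ + (j:ℝ)) := h1
    _ ≤ (1 / ((Nat.factorial j : ℝ))^2) * ((‖constA‖+1) * ((j:ℝ)+1)) := by
        refine mul_le_mul (norm_bcoef_le j) ?_ (by positivity) (by positivity)
        nlinarith [norm_nonneg constA]
    _ = (‖constA‖ + 1) * ((j:ℝ)+1) / ((Nat.factorial j : ℝ))^2 := by ring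

lemma summable_master (x : ℝ) (hx : 0 ≤ x) :
    Summable (fun j : ℕ => ((j:ℝ)+1)^3 * x^j / ((Nat.factorial j : ℝ))^2) := by
  have h2 : Summable (fun j : ℕ => ((j:ℝ)+1)^3 * (1/2:ℝ)^j) := by
    have h := summable_pow_mul_geometric_of_norm_lt_one (R := ℝ) 3
      (r := (1/2:ℝ)) (by rw [Real.norm_eq_abs]; rw [abs_of_nonneg]; norm_num; norm_num)
    have h' := (summable_nat_add_iff 1).2 h
    have h'' := h'.mul_left (2:ℝ)
    refine h''.congr fun n => ?_
    push_cast
    ring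
  refine Summable.of_nonneg_of_le (fun j => by positivity) (fun j => ?_)
    (h2.mul_right (Real.exp (2*x)))
  have hf : (1:ℝ) ≤ (Nat.factorial j : ℝ) := by
    exact_mod_cast Nat.one_le_iff_ne_zero.2 (Nat.factorial_ne_zero j)
  have e2 : (2*x)^j/((Nat.factorial j:ℝ))^2 ≤ (2*x)^j/(Nat.factorial j:ℝ) := by
    apply div_le_div_of_nonneg_left (by positivity) (by positivity)
    nlinarith
  have e3 : (2*x)^j/(Nat.factorial j:ℝ) ≤ Real.exp (2*x) :=
    Real.pow_div_factorial_le_exp (x := 2*x) (by positivity) j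
  have e1 : x^j / ((Nat.factorial j:ℝ))^2
      = (1/2:ℝ)^j * ((2*x)^j/((Nat.factorial j:ℝ))^2) := by
    rw [mul_pow]
    field_simp
    rw [mul_assoc, ← mul_pow]; norm_num
  calc ((j:ℝ)+1)^3 * x^j / ((Nat.factorial j : ℝ))^2
      = ((j:ℝ)+1)^3 * (x^j / ((Nat.factorial j : ℝ))^2) := by ring
    _ ≤ ((j:ℝ)+1)^3 * ((1/2:ℝ)^j * Real.exp (2*x)) := by
        refine mul_le_mul_of_nonneg_left ?_ (by positivity)
        rw [e1]
        refine mul_le_mul_of_nonneg_left (le_trans e2 e3) (by positivity)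
    _ = ((j:ℝ)+1)^3 * (1/2:ℝ)^j * Real.exp (2*x) := by ring

lemma summable_of_bound (f : ℕ → ℂ) (C x : ℝ) (hx : 0 ≤ x)
    (h : ∀ j, ‖f j‖ ≤ C * (((j:ℝ)+1)^3 * x^j / ((Nat.factorial j:ℝ))^2)) : Summable f :=
  Summable.of_norm_bounded ((summable_master x hx).mul_left C) h

def Dbound (d : ℕ → ℂ) (C : ℝ) : Prop :=
  ∀ j, ‖d j‖ ≤ C * ((j:ℝ)+1) / ((Nat.factorial j : ℝ))^2

variable {d : ℕ → ℂ} {C : ℝ} {k : ℝ}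

lemma Dbound.nonneg (hd : Dbound d C) : 0 ≤ C := by
  have h := (norm_nonneg (d 0)).trans (hd 0)
  simpa using h

lemma one_le_fact (j : ℕ) : (1:ℝ) ≤ (Nat.factorial j : ℝ) := by
  exact_mod_cast Nat.one_le_iff_ne_zero.2 (Nat.factorial_ne_zero j)

lemma hd_succ (hd : Dbound d C) (j : ℕ) :
    ‖d (j+1)‖ ≤ C * ((j:ℝ)+2) / ((Nat.factorial j : ℝ))^2 := by
  have h := hd (j+1)
  push_cast at h
  have he : (j:ℝ)+1+1 = (j:ℝ)+2 := by ring
  rw [he] at h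
  have hff : (Nat.factorial j : ℝ) ≤ ((Nat.factorial (j+1) : ℝ)) := by
    exact_mod_cast Nat.factorial_le (Nat.le_succ j)
  calc ‖d (j+1)‖ ≤ C * ((j:ℝ)+2) / ((Nat.factorial (j+1) : ℝ))^2 := h
    _ ≤ C * ((j:ℝ)+2) / ((Nat.factorial j : ℝ))^2 := by
        gcongr <;> first | exact one_le_fact j | (have := hd.nonneg; positivity)

-- L0
lemma bound0 (hd : Dbound d C) {z : ℂ} {R : ℝ} (hz : ‖z‖ ≤ R) (j : ℕ) :
    ‖d j * (k:ℂ)^(2*j) * z^(2*j)‖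
      ≤ C * (((j:ℝ)+1)^3 * ((|k| * R)^2)^j / ((Nat.factorial j : ℝ))^2) := by
  have hC := hd.nonneg
  have hR0 : 0 ≤ R := le_trans (norm_nonneg z) hz
  have hnorm : ‖d j * (k:ℂ)^(2*j) * z^(2*j)‖
      = ‖d j‖ * |k|^(2*j) * ‖z‖^(2*j) := by
    rw [norm_mul, norm_mul, norm_pow, norm_pow, Complex.norm_real, Real.norm_eq_abs]
  rw [hnorm]
  have hz' : ‖z‖^(2*j) ≤ R^(2*j) := pow_le_pow_left₀ (norm_nonneg z) hz _
  calc ‖d j‖ * |k|^(2*j) * ‖z‖^(2*j)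
      ≤ (C * ((j:ℝ)+1) / ((Nat.factorial j : ℝ))^2) * |k|^(2*j) * R^(2*j) := by
        gcongr
        exact hd j
    _ = (C * ((j:ℝ)+1)) * (((|k| * R)^2)^j / ((Nat.factorial j : ℝ))^2) := by
        simp only [pow_mul, mul_pow]
        ring
    _ ≤ C * (((j:ℝ)+1)^3 * ((|k| * R)^2)^j / ((Nat.factorial j : ℝ))^2) := by
        have hj1 : (1:ℝ) ≤ (j:ℝ)+1 := by
          have : (0:ℝ) ≤ j := Nat.cast_nonneg j
          linarith
        have h1 : ((j:ℝ)+1) ≤ ((j:ℝ)+1)^3 := le_self_pow₀ hj1 (by norm_num)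
        have h2 : (0:ℝ) ≤ ((|k| * R)^2)^j / ((Nat.factorial j : ℝ))^2 := by positivity
        calc (C * ((j:ℝ)+1)) * (((|k| * R)^2)^j / ((Nat.factorial j : ℝ))^2)
            ≤ (C * ((j:ℝ)+1)^3) * (((|k| * R)^2)^j / ((Nat.factorial j : ℝ))^2) := by
              apply mul_le_mul_of_nonneg_right _ h2
              exact mul_le_mul_of_nonneg_left h1 hC
          _ = C * (((j:ℝ)+1)^3 * ((|k| * R)^2)^j / ((Nat.factorial j : ℝ))^2) := by ring

lemma scalar_step {a b y : ℝ} (h : a ≤ b) (hy : 0 ≤ y) : a * y ≤ b * y :=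
  mul_le_mul_of_nonneg_right h hy

-- termwise derivative of pser, unshifted
lemma bound0d (hd : Dbound d C) {z : ℂ} {R : ℝ} (hz : ‖z‖ ≤ R) (hR : 1 ≤ R) (j : ℕ) :
    ‖d j * (k:ℂ)^(2*j) * (((2*j : ℕ):ℂ) * z^(2*j-1))‖
      ≤ (2*C) * (((j:ℝ)+1)^3 * ((|k| * R)^2)^j / ((Nat.factorial j : ℝ))^2) := by
  have hC := hd.nonneg
  have hR0 : (0:ℝ) ≤ R := le_trans zero_le_one hR
  cases j with
  | zero => simp; positivity
  | succ m =>
    have hexp : 2*(m+1)-1 = 2*m+1 := by omega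
    rw [hexp]
    have hdm := hd (m+1)
    push_cast at hdm
    have hm0 : (0:ℝ) ≤ (m:ℝ) := Nat.cast_nonneg m
    calc ‖d (m+1) * (k:ℂ)^(2*(m+1)) * (((2*(m+1) : ℕ):ℂ) * z^(2*m+1))‖
        = ‖d (m+1)‖ * |k|^(2*(m+1)) * ((2*((m:ℝ)+1)) * ‖z‖^(2*m+1)) := by
          rw [norm_mul, norm_mul, norm_mul, norm_pow, norm_pow, Complex.norm_real,
            Real.norm_eq_abs, Complex.norm_natCast]
          push_cast
          ring
      _ ≤ (C * ((m:ℝ)+1+1) / ((Nat.factorial (m+1) : ℝ))^2) * |k|^(2*(m+1))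
            * ((2*((m:ℝ)+1)) * R^(2*m+1)) := by
          gcongr <;> first | exact hdm | exact pow_le_pow_left₀ (norm_nonneg z) hz _ | positivity
      _ ≤ (C * ((m:ℝ)+1+1) / ((Nat.factorial (m+1) : ℝ))^2) * |k|^(2*(m+1))
            * ((2*((m:ℝ)+1)) * R^(2*m+2)) := by
          gcongr <;> first | exact hR | omega | positivity
      _ = (C * ((m:ℝ)+2) * (2*((m:ℝ)+1)))
            * (((|k| * R)^2)^(m+1) / ((Nat.factorial (m+1) : ℝ))^2) := by ring
      _ ≤ (2*C * ((m:ℝ)+2)^3)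
            * (((|k| * R)^2)^(m+1) / ((Nat.factorial (m+1) : ℝ))^2) := by
          refine scalar_step (by nlinarith [mul_nonneg hC (pow_nonneg hm0 3), mul_nonneg hC (pow_nonneg hm0 2), mul_nonneg hC hm0, hC]) (by positivity)
      _ = (2*C) * ((((m+1:ℕ):ℝ)+1)^3 * ((|k| * R)^2)^(m+1)
            / ((Nat.factorial (m+1) : ℝ))^2) := by push_cast; ring

-- terms of pser1
lemma bound1 (hd : Dbound d C) {z : ℂ} {R : ℝ} (hz : ‖z‖ ≤ R) (j : ℕ) :
    ‖d (j+1) * (k:ℂ)^(2*(j+1)) * ((2*(j+1) : ℕ):ℂ) * z^(2*j+1)‖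
      ≤ (4*C*|k|^2*R) * (((j:ℝ)+1)^3 * ((|k| * R)^2)^j / ((Nat.factorial j : ℝ))^2) := by
  have hC := hd.nonneg
  have hR0 : 0 ≤ R := le_trans (norm_nonneg z) hz
  have hm0 : (0:ℝ) ≤ (j:ℝ) := Nat.cast_nonneg j
  calc ‖d (j+1) * (k:ℂ)^(2*(j+1)) * ((2*(j+1) : ℕ):ℂ) * z^(2*j+1)‖
      = ‖d (j+1)‖ * |k|^(2*(j+1)) * (2*((j:ℝ)+1)) * ‖z‖^(2*j+1) := by
        rw [norm_mul, norm_mul, norm_mul, norm_pow, norm_pow, Complex.norm_real,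
          Real.norm_eq_abs, Complex.norm_natCast]
        push_cast
        ring
    _ ≤ (C * ((j:ℝ)+2) / ((Nat.factorial j : ℝ))^2) * |k|^(2*(j+1))
          * (2*((j:ℝ)+1)) * R^(2*j+1) := by
        gcongr <;> first | exact hd_succ hd j | exact pow_le_pow_left₀ (norm_nonneg z) hz _ | positivity
    _ = (C * ((j:ℝ)+2) * (2*((j:ℝ)+1)))
          * ((|k|^2*R) * (((|k| * R)^2)^j / ((Nat.factorial j : ℝ))^2)) := by ring
    _ ≤ (4*C * ((j:ℝ)+1)^3)
          * ((|k|^2*R) * (((|k| * R)^2)^j / ((Nat.factorial j : ℝ))^2)) := by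
        refine scalar_step (by nlinarith [mul_nonneg hC (pow_nonneg hm0 3), mul_nonneg hC (pow_nonneg hm0 2), mul_nonneg hC hm0, hC]) (by positivity)
    _ = (4*C*|k|^2*R) * (((j:ℝ)+1)^3 * ((|k| * R)^2)^j / ((Nat.factorial j : ℝ))^2) := by
        ring

-- terms of pser1 divided by z
lemma bound1q (hd : Dbound d C) {z : ℂ} {R : ℝ} (hz : ‖z‖ ≤ R) (j : ℕ) :
    ‖d (j+1) * (k:ℂ)^(2*(j+1)) * ((2*(j+1) : ℕ):ℂ) * z^(2*j)‖
      ≤ (4*C*|k|^2) * (((j:ℝ)+1)^3 * ((|k| * R)^2)^j / ((Nat.factorial j : ℝ))^2) := by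
  have hC := hd.nonneg
  have hR0 : 0 ≤ R := le_trans (norm_nonneg z) hz
  have hm0 : (0:ℝ) ≤ (j:ℝ) := Nat.cast_nonneg j
  calc ‖d (j+1) * (k:ℂ)^(2*(j+1)) * ((2*(j+1) : ℕ):ℂ) * z^(2*j)‖
      = ‖d (j+1)‖ * |k|^(2*(j+1)) * (2*((j:ℝ)+1)) * ‖z‖^(2*j) := by
        rw [norm_mul, norm_mul, norm_mul, norm_pow, norm_pow, Complex.norm_real,
          Real.norm_eq_abs, Complex.norm_natCast]
        push_cast
        ring
    _ ≤ (C * ((j:ℝ)+2) / ((Nat.factorial j : ℝ))^2) * |k|^(2*(j+1))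
          * (2*((j:ℝ)+1)) * R^(2*j) := by
        gcongr <;> first | exact hd_succ hd j | exact pow_le_pow_left₀ (norm_nonneg z) hz _ | positivity
    _ = (C * ((j:ℝ)+2) * (2*((j:ℝ)+1)))
          * ((|k|^2) * (((|k| * R)^2)^j / ((Nat.factorial j : ℝ))^2)) := by ring
    _ ≤ (4*C * ((j:ℝ)+1)^3)
          * ((|k|^2) * (((|k| * R)^2)^j / ((Nat.factorial j : ℝ))^2)) := by
        refine scalar_step (by nlinarith [mul_nonneg hC (pow_nonneg hm0 3), mul_nonneg hC (pow_nonneg hm0 2), mul_nonneg hC hm0, hC]) (by positivity)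
    _ = (4*C*|k|^2) * (((j:ℝ)+1)^3 * ((|k| * R)^2)^j / ((Nat.factorial j : ℝ))^2) := by
        ring

-- terms of pser2
lemma bound2 (hd : Dbound d C) {z : ℂ} {R : ℝ} (hz : ‖z‖ ≤ R) (j : ℕ) :
    ‖d (j+1) * (k:ℂ)^(2*(j+1)) * ((2*(j+1) : ℕ):ℂ) * ((2*j+1 : ℕ):ℂ) * z^(2*j)‖
      ≤ (8*C*|k|^2) * (((j:ℝ)+1)^3 * ((|k| * R)^2)^j / ((Nat.factorial j : ℝ))^2) := by
  have hC := hd.nonneg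
  have hR0 : 0 ≤ R := le_trans (norm_nonneg z) hz
  have hm0 : (0:ℝ) ≤ (j:ℝ) := Nat.cast_nonneg j
  calc ‖d (j+1) * (k:ℂ)^(2*(j+1)) * ((2*(j+1) : ℕ):ℂ) * ((2*j+1 : ℕ):ℂ) * z^(2*j)‖
      = ‖d (j+1)‖ * |k|^(2*(j+1)) * (2*((j:ℝ)+1)) * (2*(j:ℝ)+1) * ‖z‖^(2*j) := by
        rw [norm_mul, norm_mul, norm_mul, norm_mul, norm_pow, norm_pow, Complex.norm_real,
          Real.norm_eq_abs, Complex.norm_natCast, Complex.norm_natCast]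
        push_cast
        ring
    _ ≤ (C * ((j:ℝ)+2) / ((Nat.factorial j : ℝ))^2) * |k|^(2*(j+1))
          * (2*((j:ℝ)+1)) * (2*(j:ℝ)+1) * R^(2*j) := by
        gcongr <;> first | exact hd_succ hd j | exact pow_le_pow_left₀ (norm_nonneg z) hz _ | positivity
    _ = (C * ((j:ℝ)+2) * (2*((j:ℝ)+1)) * (2*(j:ℝ)+1))
          * ((|k|^2) * (((|k| * R)^2)^j / ((Nat.factorial j : ℝ))^2)) := by ring
    _ ≤ (8*C * ((j:ℝ)+1)^3)
          * ((|k|^2) * (((|k| * R)^2)^j / ((Nat.factorial j : ℝ))^2)) := by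
        refine scalar_step (by nlinarith [mul_nonneg hC (pow_nonneg hm0 3), mul_nonneg hC (pow_nonneg hm0 2), mul_nonneg hC hm0, hC]) (by positivity)
    _ = (8*C*|k|^2) * (((j:ℝ)+1)^3 * ((|k| * R)^2)^j / ((Nat.factorial j : ℝ))^2) := by
        ring

def pser (k : ℝ) (d : ℕ → ℂ) (z : ℂ) : ℂ := ∑' j : ℕ, d j * (k:ℂ)^(2*j) * z^(2*j)

def pser1 (k : ℝ) (d : ℕ → ℂ) (z : ℂ) : ℂ :=
  ∑' j : ℕ, d (j+1) * (k:ℂ)^(2*(j+1)) * ((2*(j+1) : ℕ):ℂ) * z^(2*j+1)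

def pser2 (k : ℝ) (d : ℕ → ℂ) (z : ℂ) : ℂ :=
  ∑' j : ℕ, d (j+1) * (k:ℂ)^(2*(j+1)) * ((2*(j+1) : ℕ):ℂ) * ((2*j+1 : ℕ):ℂ) * z^(2*j)

lemma summable0 (hd : Dbound d C) (z : ℂ) :
    Summable (fun j : ℕ => d j * (k:ℂ)^(2*j) * z^(2*j)) :=
  summable_of_bound _ C ((|k| * ‖z‖)^2) (by positivity) (fun j => bound0 hd le_rfl j)

lemma summable1 (hd : Dbound d C) (z : ℂ) :
    Summable (fun j : ℕ => d (j+1) * (k:ℂ)^(2*(j+1)) * ((2*(j+1) : ℕ):ℂ) * z^(2*j+1)) :=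
  summable_of_bound _ (4*C*|k|^2*‖z‖) ((|k| * ‖z‖)^2) (by positivity)
    (fun j => bound1 hd le_rfl j)

lemma summable1q (hd : Dbound d C) (z : ℂ) :
    Summable (fun j : ℕ => d (j+1) * (k:ℂ)^(2*(j+1)) * ((2*(j+1) : ℕ):ℂ) * z^(2*j)) :=
  summable_of_bound _ (4*C*|k|^2) ((|k| * ‖z‖)^2) (by positivity)
    (fun j => bound1q hd le_rfl j)

lemma summable2 (hd : Dbound d C) (z : ℂ) :
    Summable (fun j : ℕ =>
      d (j+1) * (k:ℂ)^(2*(j+1)) * ((2*(j+1) : ℕ):ℂ) * ((2*j+1 : ℕ):ℂ) * z^(2*j)) :=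
  summable_of_bound _ (8*C*|k|^2) ((|k| * ‖z‖)^2) (by positivity)
    (fun j => bound2 hd le_rfl j)

lemma hasDerivAt_pser (hd : Dbound d C) (z : ℂ) :
    HasDerivAt (pser k d) (pser1 k d z) z := by
  set R : ℝ := ‖z‖ + 1 with hRdef
  have hR1 : 1 ≤ R := by have := norm_nonneg z; rw [hRdef]; linarith
  have hzball : z ∈ Metric.ball (0:ℂ) R := by
    rw [Metric.mem_ball, dist_zero_right, hRdef]; linarith
  have h0ball : (0:ℂ) ∈ Metric.ball (0:ℂ) R := by
    rw [Metric.mem_ball, dist_zero_right, norm_zero, hRdef]; linarith [norm_nonneg z]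
  have hu : Summable (fun j : ℕ =>
      (2*C) * (((j:ℝ)+1)^3 * ((|k| * R)^2)^j / ((Nat.factorial j : ℝ))^2)) :=
    ((summable_master _ (by positivity)).mul_left _)
  have key := hasDerivAt_tsum_of_isPreconnected hu Metric.isOpen_ball
    (convex_ball (0:ℂ) R).isPreconnected
    (g := fun j y => d j * (k:ℂ)^(2*j) * y^(2*j))
    (g' := fun j y => d j * (k:ℂ)^(2*j) * (((2*j : ℕ):ℂ) * y^(2*j-1)))
    (fun j y _ => by
      simpa using ((hasDerivAt_pow (2*j) y).const_mul (d j * (k:ℂ)^(2*j))))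
    (fun j y hy => bound0d hd (le_of_lt (by rw [Metric.mem_ball, dist_zero_right] at hy; exact hy)) hR1 j)
    h0ball (summable0 hd 0) hzball
  have hsum' : Summable (fun j : ℕ => d j * (k:ℂ)^(2*j) * (((2*j : ℕ):ℂ) * z^(2*j-1))) :=
    Summable.of_norm_bounded hu
      (fun j => bound0d hd (le_of_lt (by rw [Metric.mem_ball, dist_zero_right] at hzball; exact hzball)) hR1 j)
  have hshift : (∑' j : ℕ, d j * (k:ℂ)^(2*j) * (((2*j : ℕ):ℂ) * z^(2*j-1)))
      = pser1 k d z := by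
    rw [Summable.tsum_eq_zero_add hsum', pser1]
    have h0 : d 0 * (k:ℂ)^(2*0) * (((2*0 : ℕ):ℂ) * z^(2*0-1)) = 0 := by norm_num
    rw [h0, zero_add]
    exact tsum_congr fun j => by
      rw [show 2*(j+1)-1 = 2*j+1 from by omega]; ring
  rw [← hshift]
  exact key

lemma hasDerivAt_pser1 (hd : Dbound d C) (z : ℂ) :
    HasDerivAt (pser1 k d) (pser2 k d z) z := by
  set R : ℝ := ‖z‖ + 1 with hRdef
  have hzball : z ∈ Metric.ball (0:ℂ) R := by
    rw [Metric.mem_ball, dist_zero_right, hRdef]; linarith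
  have h0ball : (0:ℂ) ∈ Metric.ball (0:ℂ) R := by
    rw [Metric.mem_ball, dist_zero_right, norm_zero, hRdef]; linarith [norm_nonneg z]
  have hu : Summable (fun j : ℕ =>
      (8*C*|k|^2) * (((j:ℝ)+1)^3 * ((|k| * R)^2)^j / ((Nat.factorial j : ℝ))^2)) :=
    ((summable_master _ (by positivity)).mul_left _)
  have key := hasDerivAt_tsum_of_isPreconnected hu Metric.isOpen_ball
    (convex_ball (0:ℂ) R).isPreconnected
    (g := fun j y => d (j+1) * (k:ℂ)^(2*(j+1)) * ((2*(j+1) : ℕ):ℂ) * y^(2*j+1))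
    (g' := fun j y => d (j+1) * (k:ℂ)^(2*(j+1)) * ((2*(j+1) : ℕ):ℂ) * ((2*j+1 : ℕ):ℂ) * y^(2*j))
    (fun j y _ => by
      have h := (hasDerivAt_pow (2*j+1) y).const_mul
        (d (j+1) * (k:ℂ)^(2*(j+1)) * ((2*(j+1) : ℕ):ℂ))
      simpa [mul_assoc] using h)
    (fun j y hy => bound2 hd
      (le_of_lt (by rw [Metric.mem_ball, dist_zero_right] at hy; exact hy)) j)
    h0ball (summable1 hd 0) hzball
  exact key


lemma dbound_bcoef : Dbound bcoef 1 := by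
  intro j
  have h := norm_bcoef_le j
  have hj : (0:ℝ) ≤ (j:ℝ) := Nat.cast_nonneg j
  have hf : (1:ℝ) ≤ (Nat.factorial j : ℝ) := one_le_fact j
  calc ‖bcoef j‖ ≤ 1 / ((Nat.factorial j : ℝ))^2 := h
    _ ≤ 1 * ((j:ℝ)+1) / ((Nat.factorial j : ℝ))^2 := by
        rw [one_mul]
        gcongr
        · linarith
    _ = 1 * ((j:ℝ)+1) / ((Nat.factorial j : ℝ))^2 := rfl

lemma dbound_ccoef : Dbound ccoef (‖constA‖ + 1) := by
  intro j
  have h := norm_ccoef_le j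
  exact h

lemma pser1_div (hz : z ≠ 0) :
    pser1 k d z / z
      = ∑' j : ℕ, d (j+1) * (k:ℂ)^(2*(j+1)) * ((2*(j+1) : ℕ):ℂ) * z^(2*j) := by
  rw [pser1, ← tsum_div_const]
  exact tsum_congr fun j => by
    rw [pow_succ]
    field_simp

lemma keyF {k : ℝ} {z : ℂ} (hz : z ≠ 0) :
    pser2 k bcoef z + pser1 k bcoef z / z + (k:ℂ)^2 * pser k bcoef z = 0 := by
  have hdb : Dbound bcoef 1 := dbound_bcoef
  rw [pser1_div hz, pser2, pser, ← tsum_mul_left,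
    ← Summable.tsum_add (summable2 hdb z) (summable1q hdb z),
    ← Summable.tsum_add ((summable2 hdb z).add (summable1q hdb z))
      (((summable0 hdb z).mul_left _))]
  have : ∀ j : ℕ,
      (bcoef (j+1) * (k:ℂ)^(2*(j+1)) * ((2*(j+1) : ℕ):ℂ) * ((2*j+1 : ℕ):ℂ) * z^(2*j)
        + bcoef (j+1) * (k:ℂ)^(2*(j+1)) * ((2*(j+1) : ℕ):ℂ) * z^(2*j))
        + (k:ℂ)^2 * (bcoef j * (k:ℂ)^(2*j) * z^(2*j)) = 0 := by
    intro j
    have hb := rec_b j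
    push_cast
    linear_combination ((k:ℂ)^(2*(j+1)) * z^(2*j)) * hb
  rw [tsum_congr this, tsum_zero]

lemma keyG {k : ℝ} {z : ℂ} (hz : z ≠ 0) :
    pser2 k ccoef z + pser1 k ccoef z / z + (k:ℂ)^2 * pser k ccoef z
      + 2 * (pser1 k bcoef z / z) = 0 := by
  have hdb : Dbound bcoef 1 := dbound_bcoef
  have hdc : Dbound ccoef (‖constA‖ + 1) := dbound_ccoef
  rw [pser1_div (d := ccoef) hz, pser1_div (d := bcoef) hz, pser2, pser,
    ← tsum_mul_left, ← tsum_mul_left,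
    ← Summable.tsum_add (summable2 hdc z) (summable1q hdc z),
    ← Summable.tsum_add ((summable2 hdc z).add (summable1q hdc z))
      (((summable0 hdc z).mul_left _)),
    ← Summable.tsum_add (((summable2 hdc z).add (summable1q hdc z)).add
      ((summable0 hdc z).mul_left _)) ((summable1q hdb z).mul_left _)]
  have : ∀ j : ℕ,
      ((ccoef (j+1) * (k:ℂ)^(2*(j+1)) * ((2*(j+1) : ℕ):ℂ) * ((2*j+1 : ℕ):ℂ) * z^(2*j)
        + ccoef (j+1) * (k:ℂ)^(2*(j+1)) * ((2*(j+1) : ℕ):ℂ) * z^(2*j))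
        + (k:ℂ)^2 * (ccoef j * (k:ℂ)^(2*j) * z^(2*j)))
        + 2 * (bcoef (j+1) * (k:ℂ)^(2*(j+1)) * ((2*(j+1) : ℕ):ℂ) * z^(2*j)) = 0 := by
    intro j
    have hc := rec_c j
    push_cast
    linear_combination ((k:ℂ)^(2*(j+1)) * z^(2*j)) * hc
  rw [tsum_congr this, tsum_zero]


set_option maxHeartbeats 1000000 in
lemma gfun_eq {k t : ℝ} (hk : 0 < k) (ht : 0 < t) :
    gfun k t = ((Real.log (k*t) : ℝ) : ℂ) * pser k bcoef (t:ℂ) + pser k ccoef (t:ℂ) := by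
  have hdb : Dbound bcoef 1 := dbound_bcoef
  have hdc : Dbound ccoef (‖constA‖ + 1) := dbound_ccoef
  have hb := summable0 (k := k) hdb (t:ℂ)
  have hc := summable0 (k := k) hdc (t:ℂ)
  have hb1 : Summable (fun j : ℕ =>
      bcoef (j+1) * (k:ℂ)^(2*(j+1)) * ((t:ℝ):ℂ)^(2*(j+1))) := (summable_nat_add_iff 1).2 hb
  have hc1 : Summable (fun j : ℕ =>
      ccoef (j+1) * (k:ℂ)^(2*(j+1)) * ((t:ℝ):ℂ)^(2*(j+1))) := (summable_nat_add_iff 1).2 hc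
  set L : ℂ := ((Real.log (k*t) : ℝ) : ℂ) with hL
  have step1 : L * pser k bcoef (t:ℂ) + pser k ccoef (t:ℂ)
      = (L * (bcoef 0 * (k:ℂ)^(2*0) * ((t:ℝ):ℂ)^(2*0))
          + ccoef 0 * (k:ℂ)^(2*0) * ((t:ℝ):ℂ)^(2*0))
        + ∑' j : ℕ, (L * (bcoef (j+1) * (k:ℂ)^(2*(j+1)) * ((t:ℝ):ℂ)^(2*(j+1)))
          + ccoef (j+1) * (k:ℂ)^(2*(j+1)) * ((t:ℝ):ℂ)^(2*(j+1))) := by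
    rw [pser, pser, Summable.tsum_eq_zero_add hb, Summable.tsum_eq_zero_add hc,
      Summable.tsum_add (hb1.mul_left L) hc1, tsum_mul_left]
    ring
  rw [step1, gfun]
  have hterm : ∀ j : ℕ,
      L * (bcoef (j+1) * (k:ℂ)^(2*(j+1)) * ((t:ℝ):ℂ)^(2*(j+1)))
        + ccoef (j+1) * (k:ℂ)^(2*(j+1)) * ((t:ℝ):ℂ)^(2*(j+1))
      = (bcoef (j+1) * (Real.log (k * t) : ℂ) + ccoef (j+1)) * ((k * t : ℝ) : ℂ)^(2*(j+1)) := by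
    intro j
    have hcast : ((k * t : ℝ) : ℂ) = (k:ℂ) * ((t:ℝ):ℂ) := by push_cast; ring
    rw [hcast, mul_pow, hL]
    ring
  rw [tsum_congr hterm]
  have hconst : (1 / (2 * (Real.pi : ℂ))) * (Real.log t : ℂ) + etaK k
      = L * (bcoef 0 * (k:ℂ)^(2*0) * ((t:ℝ):ℂ)^(2*0))
          + ccoef 0 * (k:ℂ)^(2*0) * ((t:ℝ):ℂ)^(2*0) := by
    have hlog : (Real.log (k*t) : ℂ) = (Real.log k : ℂ) + (Real.log t : ℂ) := by
      rw [Real.log_mul hk.ne' ht.ne']; push_cast; ring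
    rw [hL, hlog]
    unfold etaK bcoef ccoef
    simp only [pow_zero, Nat.mul_zero, Nat.factorial_zero, Nat.cast_one, one_pow, mul_one,
      Finset.Icc_eq_empty (by omega : ¬ (1:ℕ) ≤ 0), Finset.sum_empty, sub_zero]
    rw [bcoef]
    simp only [pow_zero, Nat.mul_zero, Nat.factorial_zero, Nat.cast_one, one_pow, mul_one]
    field_simp
    ring
  rw [← hconst]

/-- The series-defined fundamental solution profile `g` is twice differentiable on `(0,∞)`
and solves the radial Helmholtz equation `g''(t) + g'(t)/t + k²g(t) = 0` there; this encodes
the Bessel identity `H₀'(z)/z + H₀''(z) = −H₀(z)`. -/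
theorem gfun_radial_helmholtz (k : ℝ) (hk : 0 < k) :
    ∀ t : ℝ, 0 < t →
      DifferentiableAt ℝ (gfun k) t ∧ DifferentiableAt ℝ (deriv (gfun k)) t ∧
      deriv (deriv (gfun k)) t + deriv (gfun k) t / (t : ℂ) + (k : ℂ)^2 * gfun k t = 0 := by
  intro t ht
  have hdb : Dbound bcoef 1 := dbound_bcoef
  have hdc : Dbound ccoef (‖constA‖ + 1) := dbound_ccoef
  have hlogD : ∀ s : ℝ, 0 < s →
      HasDerivAt (fun u : ℝ => ((Real.log (k*u) : ℝ) : ℂ)) (((s⁻¹ : ℝ) : ℂ)) s := by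
    intro s hs
    have h1 : HasDerivAt (fun u : ℝ => k*u) k s := by
      simpa using (hasDerivAt_id s).const_mul k
    have h2 : HasDerivAt (fun u : ℝ => Real.log (k*u)) ((k*s)⁻¹ * k) s :=
      (Real.hasDerivAt_log (by positivity)).comp s h1
    have h3 : (k*s)⁻¹ * k = s⁻¹ := by field_simp
    rw [h3] at h2
    exact h2.ofReal_comp
  set G : ℝ → ℂ := fun s => ((Real.log (k*s) : ℝ) : ℂ) * pser k bcoef (s:ℂ)
    + pser k ccoef (s:ℂ) with hG
  have hEq : ∀ s : ℝ, 0 < s → gfun k s = G s := fun s hs => gfun_eq hk hs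
  have hEqEv : ∀ s : ℝ, 0 < s → gfun k =ᶠ[nhds s] G := by
    intro s hs
    filter_upwards [isOpen_Ioi.mem_nhds (show s ∈ Set.Ioi (0:ℝ) from hs)] with u hu
    exact hEq u hu
  set G1 : ℝ → ℂ := fun s => (((s⁻¹ : ℝ) : ℂ) * pser k bcoef (s:ℂ)
      + ((Real.log (k*s) : ℝ) : ℂ) * pser1 k bcoef (s:ℂ)) + pser1 k ccoef (s:ℂ) with hG1
  have hDG : ∀ s : ℝ, 0 < s → HasDerivAt G (G1 s) s := by
    intro s hs
    have hF := (hasDerivAt_pser (k := k) hdb ((s:ℝ):ℂ)).comp_ofReal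
    have hC0 := (hasDerivAt_pser (k := k) hdc ((s:ℝ):ℂ)).comp_ofReal
    exact ((hlogD s hs).mul hF).add hC0
  have hDgfun : ∀ s : ℝ, 0 < s → HasDerivAt (gfun k) (G1 s) s := by
    intro s hs
    exact (hDG s hs).congr_of_eventuallyEq (hEqEv s hs)
  have hderivEv : deriv (gfun k) =ᶠ[nhds t] G1 := by
    filter_upwards [isOpen_Ioi.mem_nhds (show t ∈ Set.Ioi (0:ℝ) from ht)] with u hu
    exact (hDgfun u hu).deriv
  have hDG1 : HasDerivAt G1
      (((((-(t^2)⁻¹ : ℝ)) : ℂ) * pser k bcoef ((t:ℝ):ℂ)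
          + ((t⁻¹ : ℝ) : ℂ) * pser1 k bcoef ((t:ℝ):ℂ)
        + (((t⁻¹ : ℝ) : ℂ) * pser1 k bcoef ((t:ℝ):ℂ)
          + ((Real.log (k*t) : ℝ) : ℂ) * pser2 k bcoef ((t:ℝ):ℂ)))
        + pser2 k ccoef ((t:ℝ):ℂ)) t := by
    have hinv : HasDerivAt (fun s : ℝ => ((s⁻¹ : ℝ) : ℂ)) (((-(t^2)⁻¹ : ℝ)) : ℂ) t :=
      (hasDerivAt_inv ht.ne').ofReal_comp
    have hF := (hasDerivAt_pser (k := k) hdb ((t:ℝ):ℂ)).comp_ofReal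
    have hF1 := (hasDerivAt_pser1 (k := k) hdb ((t:ℝ):ℂ)).comp_ofReal
    have hC1 := (hasDerivAt_pser1 (k := k) hdc ((t:ℝ):ℂ)).comp_ofReal
    exact ((hinv.mul hF).add ((hlogD t ht).mul hF1)).add hC1
  have hd2 : HasDerivAt (deriv (gfun k))
      (((((-(t^2)⁻¹ : ℝ)) : ℂ) * pser k bcoef ((t:ℝ):ℂ)
          + ((t⁻¹ : ℝ) : ℂ) * pser1 k bcoef ((t:ℝ):ℂ)
        + (((t⁻¹ : ℝ) : ℂ) * pser1 k bcoef ((t:ℝ):ℂ)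
          + ((Real.log (k*t) : ℝ) : ℂ) * pser2 k bcoef ((t:ℝ):ℂ)))
        + pser2 k ccoef ((t:ℝ):ℂ)) t :=
    hDG1.congr_of_eventuallyEq hderivEv
  refine ⟨(hDgfun t ht).differentiableAt, hd2.differentiableAt, ?_⟩
  rw [hd2.deriv, (hDgfun t ht).deriv, hEq t ht]
  have htne : ((t:ℝ):ℂ) ≠ 0 := by
    simpa using ht.ne'
  have h1 := keyF (k := k) (z := ((t:ℝ):ℂ)) htne
  have h2 := keyG (k := k) (z := ((t:ℝ):ℂ)) htne
  rw [hG, hG1]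
  push_cast
  linear_combination ((Real.log (k*t) : ℝ) : ℂ) * h1 + h2
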